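/- arXiv:2308.13260 — 3 statements merged into one kernel-verified Lean document; each statement's English description precedes it below -/
import Mathlib

section
/- Let f : 2^V → ℝ be monotone non-decreasing, submodular, with f(∅) = 0, on a finite ground set V. Let S_k = {s_1,…,s_k} be obtained by greedily choosing, at each step i, an element s_i maximizing the marginal gain f(S_{i−1} ∪ {s}) − f(S_{i−1}) over s ∈ V. Then f(S_k) ≥ (1 − ((k−1)/k)^k) · max_{|T| = k} f(T). -/
open Finset

def MonotoneSetFn {V : Type*} [DecidableEq V] (f : Finset V → ℝ) : Prop :=
  ∀ S T : Finset V, S ⊆ T → f S ≤ f T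

def SubmodularSetFn {V : Type*} [DecidableEq V] (f : Finset V → ℝ) : Prop :=
  ∀ S T : Finset V, S ⊆ T → ∀ v : V,
    f (insert v T) - f T ≤ f (insert v S) - f S

lemma sub_sum_gain {V : Type*} [DecidableEq V] (f : Finset V → ℝ)
    (hsub : SubmodularSetFn f) (A : Finset V) :
    ∀ T : Finset V, f (A ∪ T) - f A ≤ ∑ t ∈ T, (f (insert t A) - f A) := by
  intro T
  induction T using Finset.induction_on with
  | empty => simp
  | @insert x T hx ih =>
    rw [Finset.sum_insert hx]
    have h1 : f (A ∪ insert x T) = f (insert x (A ∪ T)) := by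
      congr 1
      ext y; simp [or_left_comm]
    have h2 := hsub A (A ∪ T) (Finset.subset_union_left) x
    rw [h1]; linarith

/-- Nemhauser–Wolsey–Fisher greedy guarantee for cardinality-constrained
monotone submodular maximization. -/
theorem stmt_6 {V : Type*} [Fintype V] [DecidableEq V] (f : Finset V → ℝ)
    (hmono : MonotoneSetFn f) (hsub : SubmodularSetFn f) (hempty : f ∅ = 0)
    (k : ℕ) (hk : 1 ≤ k) (S : ℕ → Finset V) (hS0 : S 0 = ∅)
    (hgreedy : ∀ i < k, ∃ s : V, S (i + 1) = insert s (S i) ∧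
      ∀ t : V, f (insert t (S i)) - f (S i) ≤ f (insert s (S i)) - f (S i)) :
    ∀ T : Finset V, T.card = k →
      f (S k) ≥ (1 - (((k : ℝ) - 1) / k) ^ k) * f T := by
  intro T hT
  have hkR : (0:ℝ) < k := by exact_mod_cast hk
  have hcnn : (0:ℝ) ≤ ((k:ℝ) - 1) / k := by
    apply div_nonneg _ hkR.le
    have : (1:ℝ) ≤ k := by exact_mod_cast hk
    linarith
  have hfT : 0 ≤ f T := by
    have := hmono ∅ T (Finset.empty_subset T); linarith
  -- per-step: f T - f (S (i+1)) ≤ (1 - 1/k)(f T - f (S i))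
  have step : ∀ i < k, f T - f (S (i+1)) ≤ (((k:ℝ) - 1) / k) * (f T - f (S i)) := by
    intro i hi
    obtain ⟨s, hSs, hmax⟩ := hgreedy i hi
    have hbound : f T - f (S i) ≤ (k:ℝ) * (f (S (i+1)) - f (S i)) := by
      have h1 : f T ≤ f (S i ∪ T) := hmono T _ (Finset.subset_union_right)
      have h2 := sub_sum_gain f hsub (S i) T
      have h3 : ∑ t ∈ T, (f (insert t (S i)) - f (S i))
          ≤ ∑ _t ∈ T, (f (S (i+1)) - f (S i)) := by
        apply Finset.sum_le_sum
        intro t _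
        rw [hSs]; exact hmax t
      rw [Finset.sum_const, hT, nsmul_eq_mul] at h3
      linarith
    have : (k:ℝ) * (f T - f (S (i+1))) ≤ ((k:ℝ) - 1) * (f T - f (S i)) := by
      nlinarith
    rw [div_mul_eq_mul_div, le_div_iff₀ hkR]
    linarith [this]
  -- induction: f T - f (S i) ≤ c^i * f T
  have main : ∀ i ≤ k, f T - f (S i) ≤ (((k:ℝ) - 1) / k) ^ i * f T := by
    intro i
    induction i with
    | zero => intro _; simp [hS0, hempty]
    | succ n ih =>
      intro hn
      have hnk : n < k := hn
      have h1 := step n hnk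
      have h2 := ih (Nat.le_of_lt hnk)
      calc f T - f (S (n+1)) ≤ (((k:ℝ) - 1) / k) * (f T - f (S n)) := h1
        _ ≤ (((k:ℝ) - 1) / k) * ((((k:ℝ) - 1) / k) ^ n * f T) :=
            mul_le_mul_of_nonneg_left h2 hcnn
        _ = (((k:ℝ) - 1) / k) ^ (n+1) * f T := by ring
  have := main k le_rfl
  linarith
end

section
/- Under the assumptions of the static crowdsensing setting (Φ as above, m ≥ 2, Φ(S_k*) > 0), the greedy algorithm selecting k users one at a time to maximize marginal gain of Φ achieves Φ(S_k) ≥ (1 − ((m−2)/m)·((k−1)/k)^k) · Φ(S_k*), where S_k* is an optimal size-k set. -/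
/-!
Φ is a positive multiple of a sum of coverage functions `A ↦ #(⋃_{a ∈ C ∪ A} E₁(a))`, hence
monotone and submodular. For such a function the greedy step from `S i` gains at least `1/k` of
the remaining gap to any `k`-set `T`, so the gap `Φ(T) - Φ(S i)` shrinks by the factor
`(k - 1)/k` at every step. Finally the initial gap is at most `(m - 2)/m · Φ(T)`, because
`Φ(∅) ≥ 2|E₁|/m` (each vertex covers its own `deg` edges) while `Φ(T) ≤ |E₁|`.
-/

open Finset

/-- The set of edges of `G` incident to at least one vertex of `S`. -/
def incidentEdges {V : Type*} [Fintype V] [DecidableEq V] (G : SimpleGraph V)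
    [DecidableRel G.Adj] (S : Finset V) : Finset (Sym2 V) :=
  G.edgeFinset.filter (fun e => ∃ v ∈ S, v ∈ e)

/-- The average PoI welfare `Φ(S) = (1/m) Σ_v |E₁({v} ∪ N₂(v) ∪ S)|`. -/
noncomputable def welfare {V : Type*} [Fintype V] [DecidableEq V]
    (G1 G2 : SimpleGraph V) [DecidableRel G1.Adj] [DecidableRel G2.Adj]
    (S : Finset V) : ℝ :=
  (1 / (Fintype.card V : ℝ)) *
    ∑ v : V, ((incidentEdges G1 (insert v (G2.neighborFinset v ∪ S))).card : ℝ)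

def IsSubmodular {α : Type*} [DecidableEq α] (f : Finset α → ℝ) : Prop :=
  ∀ ⦃A B : Finset α⦄, A ⊆ B → ∀ s, f (insert s B) - f B ≤ f (insert s A) - f A

namespace IsSubmodular

variable {α : Type*} [DecidableEq α] {f : Finset α → ℝ}

theorem const_mul (hf : IsSubmodular f) {c : ℝ} (hc : 0 ≤ c) :
    IsSubmodular fun A => c * f A := fun A B hAB s => by
  simpa only [← mul_sub] using mul_le_mul_of_nonneg_left (hf hAB s) hc

theorem sum {ι : Type*} (I : Finset ι) {g : ι → Finset α → ℝ}
    (hg : ∀ i ∈ I, IsSubmodular (g i)) : IsSubmodular fun A => ∑ i ∈ I, g i A :=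
  fun A B hAB s => by
    simpa only [← Finset.sum_sub_distrib] using Finset.sum_le_sum fun i hi => hg i hi hAB s

theorem comp_union_left (hf : IsSubmodular f) (C : Finset α) :
    IsSubmodular fun A => f (C ∪ A) := fun A B hAB s => by
  simpa only [union_insert] using hf (union_subset_union_right hAB) s

theorem le_add_sum_sub (hf : IsSubmodular f) (A T : Finset α) :
    f (A ∪ T) ≤ f A + ∑ s ∈ T, (f (insert s A) - f A) := by
  induction T using Finset.induction_on with
  | empty => simp
  | insert t T ht ih =>
    rw [sum_insert ht, union_insert]
    linarith [hf (subset_union_left (s₁ := A) (s₂ := T)) t]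

end IsSubmodular

theorem isSubmodular_card_biUnion {α β : Type*} [DecidableEq α] [DecidableEq β]
    (F : α → Finset β) : IsSubmodular fun A => (#(A.biUnion F) : ℝ) := by
  have marginal : ∀ (A : Finset α) s,
      (#((insert s A).biUnion F) : ℝ) - #(A.biUnion F) = #(F s \ A.biUnion F) := by
    intro A s
    rw [biUnion_insert, ← card_sdiff_add_card]
    push_cast
    ring
  intro A B hAB s
  rw [marginal, marginal]
  exact_mod_cast card_le_card
    (sdiff_subset_sdiff le_rfl (biUnion_subset_biUnion_of_subset_left F hAB))

section Greedy

variable {α : Type*} [DecidableEq α] {f : Finset α → ℝ}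

theorem sub_le_card_mul_greedy_gain (hmono : Monotone f) (hsub : IsSubmodular f)
    {A : Finset α} {s : α} (hs : ∀ t, f (insert t A) - f A ≤ f (insert s A) - f A)
    (T : Finset α) : f T - f A ≤ #T * (f (insert s A) - f A) := by
  have hT : f T ≤ f (A ∪ T) := hmono subset_union_right
  have hsum : ∑ t ∈ T, (f (insert t A) - f A) ≤ #T * (f (insert s A) - f A) := by
    simpa only [sum_const, nsmul_eq_mul] using Finset.sum_le_sum fun t (_ : t ∈ T) => hs t
  linarith [hsub.le_add_sum_sub A T]

theorem greedy_gap_le (hmono : Monotone f) (hsub : IsSubmodular f) {k : ℕ}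
    {S : ℕ → Finset α}
    (hgreedy : ∀ i < k, ∃ s, S (i + 1) = insert s (S i) ∧
      ∀ t, f (insert t (S i)) - f (S i) ≤ f (insert s (S i)) - f (S i))
    {T : Finset α} (hT : #T = k) :
    f T - f (S k) ≤ (((k : ℝ) - 1) / k) ^ k * (f T - f (S 0)) := by
  suffices ∀ i ≤ k, f T - f (S i) ≤ (((k : ℝ) - 1) / k) ^ i * (f T - f (S 0)) from
    this k le_rfl
  intro i
  induction i with
  | zero => simp
  | succ n ih =>
    intro hn
    obtain ⟨s, hSs, hs⟩ := hgreedy n hn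
    have hstep := sub_le_card_mul_greedy_gain hmono hsub hs T
    rw [hT, ← hSs] at hstep
    have hk1 : (1 : ℝ) ≤ k := by exact_mod_cast n.succ_pos.trans_le hn
    have hk : (0 : ℝ) < k := by linarith
    have hr : 0 ≤ ((k : ℝ) - 1) / k := div_nonneg (by linarith) hk.le
    calc f T - f (S (n + 1)) ≤ ((k : ℝ) - 1) / k * (f T - f (S n)) := by
          rw [div_mul_eq_mul_div, le_div_iff₀ hk]
          linarith
      _ ≤ ((k : ℝ) - 1) / k * ((((k : ℝ) - 1) / k) ^ n * (f T - f (S 0))) :=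
          mul_le_mul_of_nonneg_left (ih (n.le_succ.trans hn)) hr
      _ = _ := by ring

end Greedy

section Crowdsensing

variable {V : Type*} [Fintype V] [DecidableEq V]

theorem incidentEdges_eq_biUnion (G : SimpleGraph V) [DecidableRel G.Adj] (A : Finset V) :
    incidentEdges G A = A.biUnion (fun v => G.incidenceFinset v) := by
  ext e
  simp only [incidentEdges, mem_filter, mem_biUnion, SimpleGraph.mem_incidenceFinset,
    SimpleGraph.incidenceSet, Set.mem_ofPred_eq, SimpleGraph.mem_edgeFinset]
  exact ⟨fun ⟨he, v, hv, hve⟩ => ⟨v, hv, he, hve⟩, fun ⟨v, hv, he, hve⟩ => ⟨he, v, hv, hve⟩⟩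

theorem incidentEdges_mono (G : SimpleGraph V) [DecidableRel G.Adj] :
    Monotone (incidentEdges G) := fun _ _ hAB =>
  monotone_filter_right _ fun _ _ ⟨v, hv, hve⟩ => ⟨v, hAB hv, hve⟩

variable (G1 G2 : SimpleGraph V) [DecidableRel G1.Adj] [DecidableRel G2.Adj]

theorem welfare_monotone : Monotone (welfare G1 G2) := by
  intro A B hAB
  unfold welfare
  gcongr
  exact incidentEdges_mono G1 (insert_subset_insert _ (union_subset_union_right hAB))

theorem welfare_isSubmodular : IsSubmodular (welfare G1 G2) := by
  have hwelfare : welfare G1 G2 = fun S => 1 / (Fintype.card V : ℝ) * ∑ v : V,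
      (#((insert v (G2.neighborFinset v) ∪ S).biUnion fun u => G1.incidenceFinset u) : ℝ) := by
    ext S
    simp only [welfare, incidentEdges_eq_biUnion, insert_union]
  rw [hwelfare]
  exact IsSubmodular.const_mul (IsSubmodular.sum _ fun v _ =>
    (isSubmodular_card_biUnion _).comp_union_left _) (by positivity)

theorem two_mul_card_edgeFinset_div_le_welfare_empty :
    2 * #G1.edgeFinset / (Fintype.card V : ℝ) ≤ welfare G1 G2 ∅ := by
  rw [welfare, one_div_mul_eq_div]
  gcongr
  have hdeg : ∀ v, G1.degree v ≤ #(incidentEdges G1 (insert v (G2.neighborFinset v ∪ ∅))) :=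
    fun v => by
      rw [← G1.card_incidenceFinset_eq_degree, incidentEdges_eq_biUnion]
      exact card_le_card
        (subset_biUnion_of_mem (fun u => G1.incidenceFinset u) (mem_insert_self v _))
  exact_mod_cast G1.sum_degrees_eq_twice_card_edges ▸ sum_le_sum fun v _ => hdeg v

theorem welfare_le_card_edgeFinset (S : Finset V) : welfare G1 G2 S ≤ #G1.edgeFinset := by
  rw [welfare, one_div_mul_eq_div]
  refine div_le_of_le_mul₀ (Nat.cast_nonneg _) (Nat.cast_nonneg _) ?_
  rw [mul_comm, ← nsmul_eq_mul, ← card_univ, ← sum_const]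
  exact sum_le_sum fun v _ => by exact_mod_cast card_le_card (filter_subset _ _)

end Crowdsensing

theorem stmt_10_general {V : Type*} [Fintype V] [DecidableEq V]
    (G1 G2 : SimpleGraph V) [DecidableRel G1.Adj] [DecidableRel G2.Adj]
    (hm : 2 ≤ Fintype.card V)
    (k : ℕ) (hk : 1 ≤ k) (S : ℕ → Finset V) (hS0 : S 0 = ∅)
    (hgreedy : ∀ i < k, ∃ s : V, S (i + 1) = insert s (S i) ∧
      ∀ t : V, welfare G1 G2 (insert t (S i)) - welfare G1 G2 (S i) ≤
        welfare G1 G2 (insert s (S i)) - welfare G1 G2 (S i))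
    (Sstar : Finset V) (hstar_card : Sstar.card = k) :
    welfare G1 G2 (S k) ≥
      (1 - (((Fintype.card V : ℝ) - 2) / (Fintype.card V : ℝ))
            * (((k : ℝ) - 1) / k) ^ k) * welfare G1 G2 Sstar := by
  set m : ℝ := (Fintype.card V : ℝ)
  set Φ := welfare G1 G2
  have hgap := greedy_gap_le (welfare_monotone G1 G2) (welfare_isSubmodular G1 G2) hgreedy
    hstar_card
  rw [hS0] at hgap
  have hm0 : m ≠ 0 := Nat.cast_ne_zero.2 (by omega)
  have hgap_empty : Φ Sstar - Φ ∅ ≤ (m - 2) / m * Φ Sstar :=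
    calc Φ Sstar - Φ ∅ ≤ Φ Sstar - 2 * #G1.edgeFinset / m := by
          linarith [two_mul_card_edgeFinset_div_le_welfare_empty G1 G2]
      _ ≤ Φ Sstar - 2 * Φ Sstar / m := by
          gcongr
          exact welfare_le_card_edgeFinset G1 G2 Sstar
      _ = (m - 2) / m * Φ Sstar := by field_simp
  have hr : 0 ≤ ((k : ℝ) - 1) / k :=
    div_nonneg (sub_nonneg.2 (by exact_mod_cast hk)) k.cast_nonneg
  linarith [mul_le_mul_of_nonneg_left hgap_empty (pow_nonneg hr k)]

/-- Greedy user selection guarantees a `1 - ((m-2)/m)((k-1)/k)^k` fraction of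
the optimal welfare in the static crowdsensing setting. -/
theorem stmt_10 {V : Type*} [Fintype V] [DecidableEq V]
    (G1 G2 : SimpleGraph V) [DecidableRel G1.Adj] [DecidableRel G2.Adj]
    (hm : 2 ≤ Fintype.card V)
    (k : ℕ) (hk : 1 ≤ k) (S : ℕ → Finset V) (hS0 : S 0 = ∅)
    (hgreedy : ∀ i < k, ∃ s : V, S (i + 1) = insert s (S i) ∧
      ∀ t : V, welfare G1 G2 (insert t (S i)) - welfare G1 G2 (S i) ≤
        welfare G1 G2 (insert s (S i)) - welfare G1 G2 (S i))
    (Sstar : Finset V) (hstar_card : Sstar.card = k)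
    (hstar_opt : ∀ T : Finset V, T.card = k → welfare G1 G2 T ≤ welfare G1 G2 Sstar)
    (hpos : 0 < welfare G1 G2 Sstar) :
    welfare G1 G2 (S k) ≥
      (1 - (((Fintype.card V : ℝ) - 2) / (Fintype.card V : ℝ))
            * (((k : ℝ) - 1) / k) ^ k) * welfare G1 G2 Sstar :=
  stmt_10_general G1 G2 hm k hk S hS0 hgreedy Sstar hstar_card
end

section
/- Let G_1=(V,E_1) and G_2=(V,∅) (empty social graph), and define Φ(S) = (1/m) Σ_{v∈V} |E_1({v} ∪ S)| for S ⊆ V, m = |V|. Then there exists S ⊆ V with |S| = k and Φ(S) = |E_1| if and only if G_1 has a vertex cover of size k. -/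
open Finset

lemma incidentEdges_subset {V : Type*} [Fintype V] [DecidableEq V] (G : SimpleGraph V)
    [DecidableRel G.Adj] (S : Finset V) : incidentEdges G S ⊆ G.edgeFinset :=
  Finset.filter_subset _ _

/-- With an empty social graph, achieving the maximum possible welfare `|E₁|`
with `k` selected users is equivalent to `G₁` having a vertex cover of size `k`
(reduction used for NP-hardness, Theorem 1). -/
theorem stmt_19 {V : Type*} [Fintype V] [DecidableEq V]
    (G1 : SimpleGraph V) [DecidableRel G1.Adj] (k : ℕ) (hk : 1 ≤ k) :
    (∃ S : Finset V, S.card = k ∧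
      (1 / (Fintype.card V : ℝ)) *
          ∑ v : V, ((incidentEdges G1 (insert v S)).card : ℝ)
        = (G1.edgeFinset.card : ℝ)) ↔
    (∃ C : Finset V, C.card = k ∧ ∀ e ∈ G1.edgeFinset, ∃ v ∈ C, v ∈ e) := by
  constructor
  · rintro ⟨S, hS, heq⟩
    -- S is nonempty, so V is nonempty
    have hSne : S.Nonempty := Finset.card_pos.mp (hS ▸ hk)
    have hVne : Nonempty V := ⟨hSne.choose⟩
    have hm : (Fintype.card V : ℝ) ≠ 0 := Nat.cast_ne_zero.mpr Fintype.card_pos.ne'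
    -- turn equation into a sum equation
    have hsum : ∑ v : V, ((incidentEdges G1 (insert v S)).card : ℝ)
        = ∑ _v : V, (G1.edgeFinset.card : ℝ) := by
      rw [Finset.sum_const, Finset.card_univ, nsmul_eq_mul, ← heq]
      field_simp
    have hle : ∀ v ∈ (Finset.univ : Finset V),
        ((incidentEdges G1 (insert v S)).card : ℝ) ≤ (G1.edgeFinset.card : ℝ) := by
      intro v _
      exact_mod_cast Finset.card_le_card (incidentEdges_subset G1 _)
    have hall := (Finset.sum_eq_sum_iff_of_le hle).mp hsum
    have hIE : ∀ v : V, incidentEdges G1 (insert v S) = G1.edgeFinset := by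
      intro v
      apply Finset.eq_of_subset_of_card_le (incidentEdges_subset G1 _)
      have := hall v (Finset.mem_univ v)
      exact_mod_cast this.ge
    refine ⟨S, hS, ?_⟩
    intro e he
    by_cases hcase : ∃ v : V, v ∉ e
    · obtain ⟨v, hv⟩ := hcase
      have : e ∈ incidentEdges G1 (insert v S) := (hIE v) ▸ he
      obtain ⟨w, hw, hwe⟩ := (Finset.mem_filter.mp this).2
      rcases Finset.mem_insert.mp hw with h | h
      · exact absurd (h ▸ hwe) hv
      · exact ⟨w, h, hwe⟩
    · push_neg at hcase
      obtain ⟨x, hx⟩ := hSne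
      exact ⟨x, hx, hcase x⟩
  · rintro ⟨C, hC, hcov⟩
    have hCne : C.Nonempty := Finset.card_pos.mp (hC ▸ hk)
    have hVne : Nonempty V := ⟨hCne.choose⟩
    have hm : (Fintype.card V : ℝ) ≠ 0 := Nat.cast_ne_zero.mpr Fintype.card_pos.ne'
    refine ⟨C, hC, ?_⟩
    have hIE : ∀ v : V, incidentEdges G1 (insert v C) = G1.edgeFinset := by
      intro v
      apply Finset.Subset.antisymm (incidentEdges_subset G1 _)
      intro e he
      obtain ⟨w, hw, hwe⟩ := hcov e he
      exact Finset.mem_filter.mpr ⟨he, w, Finset.mem_insert_of_mem hw, hwe⟩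
    simp only [hIE]
    rw [Finset.sum_const, Finset.card_univ, nsmul_eq_mul]
    field_simp
end
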